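/- Let K ⊂ ℂⁿ be a convex body with 0 in its interior whose gauge g_K is differentiable in a neighborhood of ∂K, and let γ : [0,T] → ∂K be a closed characteristic, i.e. a C¹ curve with γ(0) = γ(T) and γ̇(t) = J∇g_K(γ(t)) for all t. Then ∫₀ᵀ ∇g_K(γ(t)) dt = 0, and consequently γ cannot be translated into the interior of K: for every v ∈ ℂⁿ there exists t ∈ [0,T] with γ(t) + v ∉ int K. -/

import Mathlib

noncomputable section

open Set intervalIntegral

/-- `ℂⁿ`, the complex Euclidean space. -/
abbrev Cn (n : ℕ) := EuclideanSpace ℂ (Fin n)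

/-- The standard symplectic form `ω(x,y) = Im⟨x,y⟩` (inner product conjugate-linear in the
first argument). -/
def symp {n : ℕ} (x y : Cn n) : ℝ := (inner ℂ x y : ℂ).im

/-- `J`, multiplication by the imaginary unit. -/
def Jmul {n : ℕ} (x : Cn n) : Cn n := Complex.I • x

/-- The polar body `K° = {y : ⟨x,y⟩_ℝ ≤ 1 for all x ∈ K}`. -/
def polarC {n : ℕ} (K : Set (Cn n)) : Set (Cn n) :=
  {y | ∀ x ∈ K, (inner ℂ x y : ℂ).re ≤ 1}

/-- `c_J(K)`, defined by `c_J(K)⁻¹ = sup {ω(x,y) : x, y ∈ K°}`. -/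
def cJ {n : ℕ} (K : Set (Cn n)) : ℝ :=
  (sSup {r : ℝ | ∃ x ∈ polarC K, ∃ y ∈ polarC K, r = symp x y})⁻¹

open Topology MeasureTheory

/-! Since `γ' = J ∇g_K(γ)`, the fundamental theorem of calculus gives
`J ∫ ∇g_K(γ) = γ(T) - γ(0) = 0`; the integrand is integrable because `‖∇g_K‖` is bounded by a
Lipschitz constant of the gauge. If `γ + v` stayed in `int K`, convexity of the gauge would give
`⟪∇g_K(γ t), v⟫ ≤ g_K(γ t + v) - g_K(γ t) < 1 - 1 = 0` for every `t`, so `⟪∫ ∇g_K(γ), v⟫ < 0`. -/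

theorem ConvexOn.le_sub_of_hasFDerivAt {E : Type*} [NormedAddCommGroup E] [NormedSpace ℝ E]
    {s : Set E} {f : E → ℝ} {f' : E →L[ℝ] ℝ} {x v : E} (hf : ConvexOn ℝ s f) (hxs : x ∈ s)
    (hxv : x + v ∈ s) (hx : HasFDerivAt f f' x) : f' v ≤ f (x + v) - f x := by
  set ℓ : ℝ →ᵃ[ℝ] E := AffineMap.lineMap x (x + v)
  have hline : ConvexOn ℝ (ℓ ⁻¹' s) (f ∘ ℓ) := hf.comp_affineMap ℓ
  have hderiv : HasDerivAt (f ∘ ℓ) (f' v) 0 := by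
    have hℓ : HasDerivAt ℓ (x + v - x) 0 := AffineMap.hasDerivAt_lineMap
    simpa using hx.comp_hasDerivAt_of_eq (0 : ℝ) hℓ (by simp [ℓ])
  simpa [ℓ, slope_def_field] using
    hline.le_slope_of_hasDerivAt (by simpa [ℓ]) (by simpa [ℓ]) zero_lt_one hderiv

theorem convexOn_gauge {E : Type*} [AddCommGroup E] [Module ℝ E] {s : Set E} (hs : Convex ℝ s)
    (hsa : Absorbent ℝ s) : ConvexOn ℝ univ (gauge s) := by
  refine ⟨convex_univ, fun x _ y _ a b ha hb _ => ?_⟩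
  calc gauge s (a • x + b • y) ≤ gauge s (a • x) + gauge s (b • y) := gauge_add_le hs hsa _ _
    _ = a • gauge s x + b • gauge s y := by
      rw [gauge_smul_of_nonneg ha, gauge_smul_of_nonneg hb]

theorem HasGradientAt.norm_le_of_lipschitzWith {F : Type*} [NormedAddCommGroup F]
    [InnerProductSpace ℝ F] [CompleteSpace F] {f : F → ℝ} {f' x : F} {C : NNReal}
    (hf : HasGradientAt f f' x) (hC : LipschitzWith C f) : ‖f'‖ ≤ C := by
  simpa using hf.hasFDerivAt.le_of_lipschitz hC

theorem inner_gradient_gauge_neg_of_mem_interior {F : Type*} [NormedAddCommGroup F]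
    [InnerProductSpace ℝ F] [CompleteSpace F] {K : Set F} (hK : Convex ℝ K) (hK0 : K ∈ 𝓝 0)
    {x g v : F}
    (hg : HasGradientAt (gauge K) g x) (hx : x ∈ frontier K) (hxv : x + v ∈ interior K) :
    inner ℝ g v < 0 := by
  have hsub := (convexOn_gauge hK (absorbent_nhds_zero hK0)).le_sub_of_hasFDerivAt
    (mem_univ x) (mem_univ (x + v)) hg.hasFDerivAt
  rw [(gauge_eq_one_iff_mem_frontier hK hK0).2 hx] at hsub
  have := (gauge_lt_one_iff_mem_interior hK hK0).2 hxv
  simp only [InnerProductSpace.toDual_apply_apply] at hsub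
  linarith

theorem intervalIntegrable_of_hasDerivAt_of_norm_le {E : Type*} [NormedAddCommGroup E]
    [NormedSpace ℝ E] [CompleteSpace E] {f f' : ℝ → E} {a b C : ℝ} (hab : a ≤ b)
    (hf : ∀ t ∈ Icc a b, HasDerivAt f (f' t) t) (hC : ∀ t ∈ Icc a b, ‖f' t‖ ≤ C) :
    IntervalIntegrable f' volume a b := by
  have hderiv : EqOn (deriv f) f' (Ioo a b) := fun t ht => (hf t (Ioo_subset_Icc_self ht)).deriv
  have hIoo : IntegrableOn (deriv f) (Ioo a b) := by
    refine Measure.integrableOn_of_bounded (M := C) measure_Ioo_lt_top.ne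
      (aestronglyMeasurable_deriv f _) ?_
    filter_upwards [ae_restrict_mem measurableSet_Ioo] with t ht
    exact hderiv ht ▸ hC t (Ioo_subset_Icc_self ht)
  rw [intervalIntegrable_iff_integrableOn_Ioc_of_le hab]
  exact (hIoo.congr_fun hderiv measurableSet_Ioo).congr_set_ae Ioo_ae_eq_Ioc.symm

theorem exists_inner_nonneg_of_integral_eq_zero {F : Type*} [NormedAddCommGroup F]
    [InnerProductSpace ℝ F] [CompleteSpace F] {f : ℝ → F} {a b : ℝ} (hab : a < b)
    (hf : IntervalIntegrable f volume a b) (h0 : ∫ t in a..b, f t = 0) (v : F) :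
    ∃ t ∈ Ioo a b, 0 ≤ inner ℝ (f t) v := by
  by_contra! hneg
  have hpos : 0 < ∫ t in a..b, -innerSL ℝ v (f t) :=
    intervalIntegral_pos_of_pos_on (IntervalIntegrable.neg
      ⟨(innerSL ℝ v).integrable_comp hf.1, (innerSL ℝ v).integrable_comp hf.2⟩)
      (fun t ht => by simpa [real_inner_comm] using hneg t ht) hab
  rw [intervalIntegral.integral_neg, (innerSL ℝ v).intervalIntegral_comp_comm hf, h0] at hpos
  simp at hpos

theorem characteristic_normals_integrate_to_zero_general {n : ℕ} (K : Set (Cn n))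
    (hKconv : Convex ℝ K) (hK0 : (0 : Cn n) ∈ interior K)
    (gradg : Cn n → Cn n) (U : Set (Cn n)) (hUfr : frontier K ⊆ U)
    (hgrad : ∀ x ∈ U, HasGradientAt (gauge K) (gradg x) x)
    (T : ℝ) (hT : 0 < T) (γ : ℝ → Cn n)
    (hbd : ∀ t ∈ Icc (0 : ℝ) T, γ t ∈ frontier K)
    (hclosed : γ 0 = γ T)
    (hchar : ∀ t ∈ Icc (0 : ℝ) T, HasDerivAt γ (Jmul (gradg (γ t))) t) :
    (∫ t in (0 : ℝ)..T, gradg (γ t)) = 0 ∧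
      ∀ v : Cn n, ∃ t ∈ Icc (0 : ℝ) T, γ t + v ∉ interior K := by
  have hnhds : K ∈ 𝓝 (0 : Cn n) := mem_interior_iff_mem_nhds.mp hK0
  have hgradγ : ∀ t ∈ Icc (0 : ℝ) T, HasGradientAt (gauge K) (gradg (γ t)) (γ t) :=
    fun t ht => hgrad _ (hUfr (hbd t ht))
  obtain ⟨C, hC⟩ := hKconv.lipschitz_gauge hnhds
  have hint : IntervalIntegrable (fun t => Jmul (gradg (γ t))) volume 0 T :=
    intervalIntegrable_of_hasDerivAt_of_norm_le hT.le hchar fun t ht => by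
      simpa [Jmul, norm_smul] using (hgradγ t ht).norm_le_of_lipschitzWith hC
  have hFTC : ∫ t in (0 : ℝ)..T, Jmul (gradg (γ t)) = γ T - γ 0 :=
    integral_eq_sub_of_hasDerivAt (fun t ht => hchar t (by rwa [uIcc_of_le hT.le] at ht)) hint
  have hzero : ∫ t in (0 : ℝ)..T, gradg (γ t) = 0 := by
    simpa [Jmul, intervalIntegral.integral_smul, hclosed] using hFTC
  refine ⟨hzero, fun v => ?_⟩
  have hintg : IntervalIntegrable (fun t => gradg (γ t)) volume 0 T := by
    have hJinv : (fun t => gradg (γ t)) = (-Complex.I) • fun t => Jmul (gradg (γ t)) := by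
      funext t; simp [Jmul, smul_smul]
    exact hJinv ▸ hint.smul _
  obtain ⟨t, ht, hnonneg⟩ := exists_inner_nonneg_of_integral_eq_zero hT hintg hzero v
  have ht' := Ioo_subset_Icc_self ht
  exact ⟨t, ht', fun hin =>
    (inner_gradient_gauge_neg_of_mem_interior hKconv hnhds (hgradγ t ht') (hbd t ht') hin).not_ge
      hnonneg⟩

/-- for a convex body `K ⊂ ℂⁿ` with gauge differentiable near `∂K` and a closed
characteristic `γ : [0,T] → ∂K`, the outer normals along `γ` integrate to zero, and consequently
`γ` cannot be translated into the interior of `K`. -/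
theorem characteristic_normals_integrate_to_zero {n : ℕ} (K : Set (Cn n))
    (hKcomp : IsCompact K) (hKconv : Convex ℝ K) (hK0 : (0 : Cn n) ∈ interior K)
    (gradg : Cn n → Cn n) (U : Set (Cn n)) (hUopen : IsOpen U) (hUfr : frontier K ⊆ U)
    (hgrad : ∀ x ∈ U, HasGradientAt (gauge K) (gradg x) x)
    (T : ℝ) (hT : 0 < T) (γ : ℝ → Cn n)
    (hbd : ∀ t ∈ Icc (0 : ℝ) T, γ t ∈ frontier K)
    (hclosed : γ 0 = γ T)
    (hchar : ∀ t ∈ Icc (0 : ℝ) T, HasDerivAt γ (Jmul (gradg (γ t))) t) :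
    (∫ t in (0 : ℝ)..T, gradg (γ t)) = 0 ∧
      ∀ v : Cn n, ∃ t ∈ Icc (0 : ℝ) T, γ t + v ∉ interior K :=
  characteristic_normals_integrate_to_zero_general K hKconv hK0 gradg U hUfr hgrad T hT γ hbd
    hclosed hchar
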